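/- arXiv:1411.1572 — 6 statements merged into one kernel-verified Lean document; each statement's English description precedes it below -/
import Mathlib

section
/- Let P ≥ 1 and for each 1 ≤ p ≤ P let β_p > 0, ρ_p > 0 and C_p ≥ 1 be given. Define F(y) = Σ_{p=1}^P β_p ρ_p y (C_p ρ_p^{C_p+1} y^{C_p+1} - (C_p+1) ρ_p^{C_p} y^{C_p} + 1) / ((1 - ρ_p y)(1 - ρ_p^{C_p+1} y^{C_p+1})) for y ≥ 0 with ρ_p y ≠ 1. If the saturation condition F(1) > 1 holds, then there exists a unique y = δ with 0 < δ < 1 such that F(δ) = 1. -/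
/-- Key inequality: the mean of the truncated geometric is strictly increasing. -/
lemma trunc_geom_strict (a b : ℝ) (ha : 0 ≤ a) (hab : a < b) :
    ∀ n, 2 ≤ n →
    (∑ k ∈ Finset.range n, (k : ℝ) * a ^ k) * (∑ k ∈ Finset.range n, b ^ k)
      < (∑ k ∈ Finset.range n, (k : ℝ) * b ^ k) * (∑ k ∈ Finset.range n, a ^ k) := by
  intro n hn
  induction n, hn using Nat.le_induction with
  | base =>
      simp [Finset.sum_range_succ]
      nlinarith
  | succ n hn ih =>
      have hE : 0 ≤ ∑ k ∈ Finset.range n,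
          ((n : ℝ) - k) * (b ^ n * a ^ k - a ^ n * b ^ k) := by
        apply Finset.sum_nonneg
        intro k hk
        have hk' : k < n := Finset.mem_range.mp hk
        obtain ⟨m, rfl⟩ : ∃ m, n = k + m := ⟨n - k, by omega⟩
        have hb : (0:ℝ) ≤ b := ha.trans hab.le
        have h1 : (0:ℝ) ≤ ((k + m : ℕ) : ℝ) - k := by
          push_cast; linarith [Nat.cast_nonneg (α := ℝ) m]
        apply mul_nonneg h1
        have hpow : a ^ m ≤ b ^ m := pow_le_pow_left₀ ha hab.le m
        have : a ^ (k + m) * b ^ k ≤ b ^ (k + m) * a ^ k := by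
          calc a ^ (k + m) * b ^ k = (a ^ k * b ^ k) * a ^ m := by
                rw [pow_add]; ring
            _ ≤ (a ^ k * b ^ k) * b ^ m :=
                mul_le_mul_of_nonneg_left hpow (by positivity)
            _ = b ^ (k + m) * a ^ k := by
                rw [pow_add]; ring
        linarith
      have hEid : ∑ k ∈ Finset.range n,
          ((n : ℝ) - k) * (b ^ n * a ^ k - a ^ n * b ^ k)
          = b ^ n * ((n : ℝ) * (∑ k ∈ Finset.range n, a ^ k)
              - (∑ k ∈ Finset.range n, (k : ℝ) * a ^ k))
            - a ^ n * ((n : ℝ) * (∑ k ∈ Finset.range n, b ^ k)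
              - (∑ k ∈ Finset.range n, (k : ℝ) * b ^ k)) := by
        have h : ∀ k ∈ Finset.range n, ((n : ℝ) - k) * (b ^ n * a ^ k - a ^ n * b ^ k)
            = (n : ℝ) * (b ^ n * a ^ k) - b ^ n * ((k : ℝ) * a ^ k)
              - ((n : ℝ) * (a ^ n * b ^ k) - a ^ n * ((k : ℝ) * b ^ k)) := by
          intro k _; ring
        rw [Finset.sum_congr rfl h]
        simp only [Finset.sum_sub_distrib, ← Finset.mul_sum]
        ring
      simp only [Finset.sum_range_succ]
      nlinarith [ih, hE, hEid]

/-- Existence and uniqueness of the solution δ ∈ (0,1) of the fixed point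
equation F(δ) = 1, where F(y) = Σ_p β_p E[G_p(ρ_p y)] is the expected number of
bound ribosomes (E[G_p(z)] the mean of a truncated geometric with parameter z on
{0,...,C_p}), under the saturation condition F(1) > 1. -/
theorem fixed_point_saturation (P : ℕ) (hP : 1 ≤ P)
    (β ρ : Fin P → ℝ) (C : Fin P → ℕ)
    (hβ : ∀ p, 0 < β p) (hρ : ∀ p, 0 < ρ p) (hC : ∀ p, 1 ≤ C p)
    (F : ℝ → ℝ)
    (hF : ∀ y : ℝ, F y = ∑ p, β p *
        ((∑ k ∈ Finset.range (C p + 1), (k : ℝ) * (ρ p * y) ^ k) /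
         (∑ k ∈ Finset.range (C p + 1), (ρ p * y) ^ k)))
    (hsat : 1 < F 1) :
    ∃! δ : ℝ, δ ∈ Set.Ioo (0 : ℝ) 1 ∧ F δ = 1 := by
  haveI : Nonempty (Fin P) := Fin.pos_iff_nonempty.mp hP
  -- positivity of denominators
  have hD : ∀ (p : Fin P) (y : ℝ), 0 ≤ y →
      (0 : ℝ) < ∑ k ∈ Finset.range (C p + 1), (ρ p * y) ^ k := by
    intro p y hy
    have h0 : (0:ℝ) ≤ ρ p * y := mul_nonneg (hρ p).le hy
    have h1 : ((ρ p * y) ^ 0 : ℝ) ≤ ∑ k ∈ Finset.range (C p + 1), (ρ p * y) ^ k :=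
      Finset.single_le_sum (fun i _ => pow_nonneg h0 i)
        (Finset.mem_range.mpr (Nat.succ_pos _))
    simpa using lt_of_lt_of_le one_pos (by simpa using h1)
  -- strict monotonicity of F on [0, ∞)
  have hmono : StrictMonoOn F (Set.Ici (0:ℝ)) := by
    intro x hx y hy hxy
    rw [hF x, hF y]
    apply Finset.sum_lt_sum_of_nonempty Finset.univ_nonempty
    intro p _
    apply mul_lt_mul_of_pos_left _ (hβ p)
    rw [div_lt_div_iff₀ (hD p x hx) (hD p y hy)]
    exact trunc_geom_strict (ρ p * x) (ρ p * y)
      (mul_nonneg (hρ p).le hx) ((mul_lt_mul_iff_right₀ (hρ p)).mpr hxy)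
      (C p + 1) (by have := hC p; omega)
  -- continuity of F on [0,1]
  have hFe : F = fun y => ∑ p, β p *
        ((∑ k ∈ Finset.range (C p + 1), (k : ℝ) * (ρ p * y) ^ k) /
         (∑ k ∈ Finset.range (C p + 1), (ρ p * y) ^ k)) := funext hF
  have hcont : ContinuousOn F (Set.Icc (0:ℝ) 1) := by
    rw [hFe]
    apply continuousOn_finset_sum
    intro p _
    apply ContinuousOn.mul continuousOn_const
    apply ContinuousOn.div
    · exact (Continuous.continuousOn (by continuity))
    · exact (Continuous.continuousOn (by continuity))
    · intro y hy
      exact (hD p y hy.1).ne'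
  -- F 0 = 0
  have hF0 : F 0 = 0 := by
    rw [hF]
    apply Finset.sum_eq_zero
    intro p _
    have : ∑ k ∈ Finset.range (C p + 1), (k : ℝ) * (ρ p * 0) ^ k = 0 := by
      apply Finset.sum_eq_zero
      intro k _
      rcases Nat.eq_zero_or_pos k with h | h
      · simp [h]
      · simp [mul_zero, zero_pow h.ne']
    rw [this]
    simp
  -- IVT
  have hmem : (1:ℝ) ∈ Set.Ioo (F 0) (F 1) := by
    rw [hF0]; exact ⟨one_pos, hsat⟩
  obtain ⟨δ, hδmem, hδeq⟩ := intermediate_value_Ioo (by norm_num : (0:ℝ) ≤ 1) hcont hmem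
  refine ⟨δ, ⟨hδmem, hδeq⟩, ?_⟩
  rintro y ⟨hy, hyF⟩
  exact hmono.injOn (Set.mem_Ici.mpr hy.1.le) (Set.mem_Ici.mpr hδmem.1.le)
    (by rw [hyF, hδeq])
end

section
/- The function y ↦ E[G(y)], where G(y) is a truncated geometric random variable on {0,1,...,C} with parameter y > 0 (P(G(y)=k) = y^k / Σ_{j=0}^C y^j), is strictly increasing in y on (0,∞). -/
/-!
For `0 < a < b` the mean under the weights `b ^ k` exceeds the mean under `a ^ k` because the
likelihood ratio `(b / a) ^ k` increases with `k`. Cross-multiplied, this is a weighted strict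
Chebyshev inequality, which follows by symmetrizing the double sum
`∑ i, ∑ j, (i - j) * (a ^ i * b ^ j - a ^ j * b ^ i)`, each of whose off-diagonal terms is negative.
-/

open Finset

section WeightedChebyshev

variable {ι R : Type*}

theorem two_mul_sum_mul_sum_sub_sum_mul_sum [CommRing R] (s : Finset ι) (f p q : ι → R) :
    2 * ((∑ i ∈ s, f i * p i) * ∑ j ∈ s, q j - (∑ i ∈ s, f i * q i) * ∑ j ∈ s, p j) =
      ∑ i ∈ s, ∑ j ∈ s, (f i - f j) * (p i * q j - p j * q i) := by
  have swap : ∀ g : ι → ι → R, ∑ i ∈ s, ∑ j ∈ s, g j i = ∑ i ∈ s, ∑ j ∈ s, g i j :=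
    fun g => sum_comm
  simp only [sub_mul, mul_sub, sum_sub_distrib, swap fun i j => f i * (p j * q i),
    swap fun i j => f i * (p i * q j)]
  simp only [sum_mul_sum, mul_assoc, mul_comm (q _)]
  ring

/-- The hypotheses say that `f` increases with the likelihood ratio `q / p`, strictly somewhere. -/
theorem sum_mul_sum_lt_sum_mul_sum_of_sub_mul_neg [CommRing R] [LinearOrder R]
    [IsStrictOrderedRing R] {s : Finset ι} {f p q : ι → R}
    (h : ∀ i ∈ s, ∀ j ∈ s, (f i - f j) * (p i * q j - p j * q i) ≤ 0)
    (hlt : ∃ i ∈ s, ∃ j ∈ s, (f i - f j) * (p i * q j - p j * q i) < 0) :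
    (∑ i ∈ s, f i * p i) * ∑ j ∈ s, q j < (∑ i ∈ s, f i * q i) * ∑ j ∈ s, p j := by
  obtain ⟨i₀, hi₀, j₀, hj₀, hneg⟩ := hlt
  have hsum : ∑ i ∈ s, ∑ j ∈ s, (f i - f j) * (p i * q j - p j * q i) < 0 :=
    sum_neg' (fun i hi => sum_nonpos (h i hi))
      ⟨i₀, hi₀, sum_neg' (h i₀ hi₀) ⟨j₀, hj₀, hneg⟩⟩
  rw [← two_mul_sum_mul_sum_sub_sum_mul_sum] at hsum
  linarith

end WeightedChebyshev

section PowerWeights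

variable {R : Type*} [CommRing R] [LinearOrder R] [IsStrictOrderedRing R] {a b : R}

theorem pow_mul_pow_lt_pow_mul_pow (ha : 0 < a) (hab : a < b) {i j : ℕ} (hji : j < i) :
    a ^ i * b ^ j < a ^ j * b ^ i := by
  obtain ⟨d, rfl⟩ := Nat.exists_eq_add_of_lt hji
  calc a ^ (j + d + 1) * b ^ j = a ^ (d + 1) * (a ^ j * b ^ j) := by ring
    _ < b ^ (d + 1) * (a ^ j * b ^ j) := by
        gcongr
        exact mul_pos (pow_pos ha j) (pow_pos (ha.trans hab) j)
    _ = a ^ j * b ^ (j + d + 1) := by ring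

theorem cast_sub_mul_sub_pow_mul_pow_neg (ha : 0 < a) (hab : a < b) {i j : ℕ} (hij : i ≠ j) :
    ((i : R) - j) * (a ^ i * b ^ j - a ^ j * b ^ i) < 0 := by
  rcases hij.lt_or_gt with hlt | hgt
  · exact mul_neg_of_neg_of_pos (sub_neg.2 (Nat.cast_lt.2 hlt))
      (sub_pos.2 (pow_mul_pow_lt_pow_mul_pow ha hab hlt))
  · exact mul_neg_of_pos_of_neg (sub_pos.2 (Nat.cast_lt.2 hgt))
      (sub_neg.2 (pow_mul_pow_lt_pow_mul_pow ha hab hgt))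

theorem sum_cast_mul_pow_mul_sum_pow_lt (ha : 0 < a) (hab : a < b) {s : Finset ℕ}
    (hs : s.Nontrivial) :
    (∑ k ∈ s, (k : R) * a ^ k) * ∑ k ∈ s, b ^ k <
      (∑ k ∈ s, (k : R) * b ^ k) * ∑ k ∈ s, a ^ k := by
  obtain ⟨i, hi, j, hj, hij⟩ := hs
  refine sum_mul_sum_lt_sum_mul_sum_of_sub_mul_neg (fun i _ j _ => ?_)
    ⟨i, hi, j, hj, cast_sub_mul_sub_pow_mul_pow_neg ha hab hij⟩
  rcases eq_or_ne i j with rfl | hne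
  · simp
  · exact (cast_sub_mul_sub_pow_mul_pow_neg ha hab hne).le

end PowerWeights

/-- The expectation of a truncated geometric random variable on {0,...,C}
with parameter y (probabilities y^k / Σ_j y^j) is strictly increasing in y on (0,∞). -/
theorem trunc_geom_mean_strictMono (C : ℕ) (hC : 1 ≤ C) :
    StrictMonoOn (fun y : ℝ =>
      (∑ k ∈ Finset.range (C + 1), (k : ℝ) * y ^ k) /
      (∑ k ∈ Finset.range (C + 1), y ^ k)) (Set.Ioi (0 : ℝ)) := by
  intro a ha b hb hab
  have hpos : ∀ y : ℝ, 0 < y → 0 < ∑ k ∈ range (C + 1), y ^ k := fun y hy =>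
    sum_pos (fun k _ => pow_pos hy k) nonempty_range_add_one
  rw [div_lt_div_iff₀ (hpos a ha) (hpos b hb)]
  exact sum_cast_mul_pow_mul_sum_pow_lt ha hab
    ⟨0, mem_range.2 (by omega), 1, mem_range.2 (by omega), zero_ne_one⟩
end

section
/- Consider the Markov process (X(t)) on the finite state space S = {x = (x_{p,k}) : 0 ≤ x_{p,k} ≤ C_p, Σ x_{p,k} ≤ N} with transition rates q(x, x + e_{p,k}) = λ_p r(x) when x_{p,k} + 1 ≤ C_p and r(x) ≥ 1, and q(x, x - e_{p,k}) = μ_p when x_{p,k} > 0, where r(x) = N - Σ_{p,k} x_{p,k}. Then the measure π(x) = (1/Z) (1/r(x)!) Π_{p,k} ρ_p^{x_{p,k}}, with ρ_p = λ_p/μ_p, satisfies the detailed balance equations π(x) q(x, x+e_{p,k}) = π(x+e_{p,k}) q(x+e_{p,k}, x) for all x with x, x+e_{p,k} ∈ S; hence π is a reversible invariant probability distribution. -/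
/-- The state space of the ribosome process: for each mRNA (p,k), the number of
ribosomes attached, bounded by the capacity C_p. -/
abbrev RiboState (P : ℕ) (K C : Fin P → ℕ) :=
  (i : Σ p : Fin P, Fin (K p)) → Fin (C i.1 + 1)

/-!
Binding a free ribosome to mRNA `(p, k)` multiplies `∏ ρ^x` by `ρ_p` and turns `r!` into
`(r - 1)! = r! / r`, so the product-form weight grows by the factor `ρ_p r(x) = λ_p r(x) / μ_p`;
this is exactly detailed balance. Normalisation holds by the choice of `Z`, which is positive
since every weight is.
-/

open Finset Function
open scoped Nat

section ProductForm

variable {ι 𝕜 : Type*} [Fintype ι]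

/-- The unnormalised weight `ρ^n / r!`, where `r = N - ∑ n` is the number of free ribosomes
(truncated to `0` when `∑ n > N`, outside the state space). -/
def productFormWeight [Field 𝕜] (N : ℕ) (ρ : ι → 𝕜) (n : ι → ℕ) : 𝕜 :=
  1 / ((N - ∑ j, n j)! : 𝕜) * ∏ j, ρ j ^ n j

theorem productFormWeight_pos [Field 𝕜] [LinearOrder 𝕜] [IsStrictOrderedRing 𝕜] (N : ℕ)
    {ρ : ι → 𝕜} (hρ : ∀ j, 0 < ρ j) (n : ι → ℕ) : 0 < productFormWeight N ρ n :=
  mul_pos (by positivity) (prod_pos fun j _ => pow_pos (hρ j) _)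

variable [DecidableEq ι]

theorem sum_update_succ (n : ι → ℕ) (i : ι) :
    ∑ j, update n i (n i + 1) j = ∑ j, n j + 1 := by
  rw [sum_update_of_mem (mem_univ i), ← add_sum_erase univ n (mem_univ i),
    sdiff_singleton_eq_erase]
  ring

theorem prod_pow_update_succ [CommMonoid 𝕜] (ρ : ι → 𝕜) (n : ι → ℕ) (i : ι) :
    ∏ j, ρ j ^ update n i (n i + 1) j = ρ i * ∏ j, ρ j ^ n j := by
  simp_rw [apply_update (fun j k => ρ j ^ k)]
  rw [prod_update_of_mem (mem_univ i), ← mul_prod_erase univ (fun j => ρ j ^ n j) (mem_univ i),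
    sdiff_singleton_eq_erase, pow_succ', mul_assoc]

theorem productFormWeight_update_succ [Field 𝕜] [CharZero 𝕜] (N : ℕ) (ρ : ι → 𝕜)
    (n : ι → ℕ) (i : ι) (h : ∑ j, n j + 1 ≤ N) :
    productFormWeight N ρ (update n i (n i + 1)) =
      productFormWeight N ρ n * (ρ i * ((N - ∑ j, n j : ℕ) : 𝕜)) := by
  have hfree : N - ∑ j, n j = N - (∑ j, n j + 1) + 1 := by omega
  rw [productFormWeight, productFormWeight, sum_update_succ, prod_pow_update_succ, hfree]
  generalize N - (∑ j, n j + 1) = r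
  rw [Nat.factorial_succ]
  push_cast
  field_simp

end ProductForm

/-- The measure π(x) = (1/Z)(1/r(x)!) Π ρ_p^{x_{p,k}} is a probability on
S = {x : Σ x ≤ N} (when Z is the partition sum) and satisfies the detailed
balance equations for the ribosome Markov process; hence it is a reversible
invariant distribution. -/
theorem detailed_balance_reversible (N P : ℕ)
    (K : Fin P → ℕ)
    (C : Fin P → ℕ)
    (lam mu : Fin P → ℝ) (hlam : ∀ p, 0 < lam p) (hmu : ∀ p, 0 < mu p)
    (r : RiboState P K C → ℕ)
    (hr : ∀ x, r x = N - ∑ i, (x i : ℕ))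
    (Z : ℝ)
    (hZ : Z = ∑ x ∈ Finset.univ.filter
        (fun x : RiboState P K C => ∑ i, (x i : ℕ) ≤ N),
        (1 / (Nat.factorial (r x) : ℝ)) * ∏ i, (lam i.1 / mu i.1) ^ (x i : ℕ))
    (π : RiboState P K C → ℝ)
    (hπ : ∀ x, π x = (1 / Z) * (1 / (Nat.factorial (r x) : ℝ)) *
        ∏ i, (lam i.1 / mu i.1) ^ (x i : ℕ)) :
    (∑ x ∈ Finset.univ.filter
        (fun x : RiboState P K C => ∑ i, (x i : ℕ) ≤ N), π x = 1)
    ∧ ∀ (x : RiboState P K C) (i : Σ p : Fin P, Fin (K p))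
        (h1 : (x i : ℕ) + 1 ≤ C i.1) (h2 : (∑ j, (x j : ℕ)) + 1 ≤ N),
        π x * (lam i.1 * (r x : ℝ)) =
          π (Function.update x i ⟨(x i : ℕ) + 1, by omega⟩) * mu i.1 := by
  have hweight : ∀ x : RiboState P K C,
      1 / ((r x)! : ℝ) * ∏ i, (lam i.1 / mu i.1) ^ (x i : ℕ) =
        productFormWeight N (fun i => lam i.1 / mu i.1) (fun i => (x i : ℕ)) := fun x => by
    rw [hr]; rfl
  simp only [mul_assoc, hweight] at hZ hπ
  have hρ : ∀ i : Σ p, Fin (K p), 0 < lam i.1 / mu i.1 := fun i => div_pos (hlam i.1) (hmu i.1)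
  have hZ_pos : 0 < Z := hZ ▸ sum_pos (fun x _ => productFormWeight_pos N hρ _) ⟨0, by simp⟩
  refine ⟨?_, fun x i h1 h2 => ?_⟩
  · simp_rw [hπ, ← mul_sum, ← hZ, one_div_mul_cancel hZ_pos.ne']
  · have hbind : (fun j => (update x i ⟨(x i : ℕ) + 1, by omega⟩ j : ℕ)) =
        update (fun j => (x j : ℕ)) i ((x i : ℕ) + 1) :=
      funext (apply_update (fun j (v : Fin (C j.1 + 1)) => (v : ℕ)) x i _)
    rw [hπ, hπ, hbind, productFormWeight_update_succ N _ _ i h2, hr]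
    field_simp [(hmu i.1).ne']
end

section
/- Let π be the reversible invariant distribution π(x) = (1/Z)(1/r(x)!) Π_{p,k} ρ_p^{x_{p,k}} on S. Then the distribution of the number of free ribosomes R = r(X) at equilibrium satisfies P(R = n) = (1/Z_R) (1/n!) P(Σ_{p=1}^P Σ_{k=1}^{K_p} G_{p,k} = N - n) for 0 ≤ n ≤ N, where (G_{p,k}) are independent random variables, G_{p,k} having the truncated geometric distribution with parameter ρ_p on {0,...,C_p}, and Z_R is a normalization constant. -/
/-- At equilibrium, the number R of free ribosomes satisfies
P(R = n) = (1/Z_R)(1/n!) P(Σ G_{p,k} = N - n), where the G_{p,k} are independent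
truncated geometric random variables with parameter ρ_p on {0,...,C_p}. -/
theorem free_ribosomes_distribution (N P : ℕ) (K C : Fin P → ℕ)
    (hK : ∀ p, 1 ≤ K p) (hC : ∀ p, 1 ≤ C p)
    (lam mu ρ : Fin P → ℝ) (hlam : ∀ p, 0 < lam p) (hmu : ∀ p, 0 < mu p)
    (hρ : ∀ p, ρ p = lam p / mu p)
    (r : RiboState P K C → ℕ) (hr : ∀ x, r x = N - ∑ i, (x i : ℕ))
    (Z : ℝ)
    (hZ : Z = ∑ x ∈ Finset.univ.filter
        (fun x : RiboState P K C => ∑ i, (x i : ℕ) ≤ N),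
        (1 / (Nat.factorial (r x) : ℝ)) * ∏ i, ρ i.1 ^ (x i : ℕ))
    (π : RiboState P K C → ℝ)
    (hπ : ∀ x, π x = (1 / Z) * (1 / (Nat.factorial (r x) : ℝ)) *
        ∏ i, ρ i.1 ^ (x i : ℕ))
    -- P(Σ_{p,k} G_{p,k} = m): convolution of independent truncated geometric laws
    (Psum : ℕ → ℝ)
    (hPsum : ∀ m, Psum m = ∑ x ∈ Finset.univ.filter
        (fun x : RiboState P K C => ∑ i, (x i : ℕ) = m),
        ∏ i, (ρ i.1 ^ (x i : ℕ) / ∑ j ∈ Finset.range (C i.1 + 1), ρ i.1 ^ j))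
    (ZR : ℝ)
    (hZR : ZR = ∑ n ∈ Finset.range (N + 1),
        (1 / (Nat.factorial n : ℝ)) * Psum (N - n))
    (n : ℕ) (hn : n ≤ N) :
    ∑ x ∈ Finset.univ.filter
        (fun x : RiboState P K C => ∑ i, (x i : ℕ) ≤ N ∧ r x = n), π x
      = (1 / ZR) * (1 / (Nat.factorial n : ℝ)) * Psum (N - n) := by
  classical
  have hρpos : ∀ p, 0 < ρ p := fun p => by rw [hρ]; exact div_pos (hlam p) (hmu p)
  set D : ℝ := ∏ i : (Σ p : Fin P, Fin (K p)), ∑ j ∈ Finset.range (C i.1 + 1), ρ i.1 ^ j with hDdef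
  have hDpos : 0 < D := by
    apply Finset.prod_pos
    intro i _
    apply Finset.sum_pos
    · intro j _; exact pow_pos (hρpos i.1) j
    · exact ⟨0, Finset.mem_range.mpr (Nat.succ_pos _)⟩
  set S : ℕ → ℝ := fun m => ∑ x ∈ Finset.univ.filter
      (fun x : RiboState P K C => ∑ i, (x i : ℕ) = m),
      ∏ i, ρ i.1 ^ (x i : ℕ) with hSdef
  have hPsumS : ∀ m, Psum m = S m / D := by
    intro m
    rw [hPsum m]
    simp only [Finset.prod_div_distrib, ← hDdef]
    rw [← Finset.sum_div, hSdef]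
  have hfilter : ∀ m, m ≤ N → (Finset.univ.filter
      (fun x : RiboState P K C => (∑ i, (x i : ℕ)) ≤ N ∧ r x = m))
      = Finset.univ.filter (fun x : RiboState P K C => ∑ i, (x i : ℕ) = N - m) := by
    intro m hm
    ext x
    simp only [Finset.mem_filter, Finset.mem_univ, true_and, hr x]
    omega
  have hpart : ∀ m, m ≤ N →
      ∑ x ∈ Finset.univ.filter
        (fun x : RiboState P K C => (∑ i, (x i : ℕ)) ≤ N ∧ r x = m),
        (1 / (Nat.factorial (r x) : ℝ)) * ∏ i, ρ i.1 ^ (x i : ℕ)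
      = (1 / (Nat.factorial m : ℝ)) * S (N - m) := by
    intro m hm
    rw [hfilter m hm, hSdef, Finset.mul_sum]
    refine Finset.sum_congr rfl fun x hx => ?_
    have hx' : ∑ i, (x i : ℕ) = N - m := (Finset.mem_filter.mp hx).2
    have : r x = m := by rw [hr x, hx']; omega
    rw [this]
  have hZ' : Z = ∑ m ∈ Finset.range (N + 1), (1 / (Nat.factorial m : ℝ)) * S (N - m) := by
    rw [hZ, ← Finset.sum_fiberwise_of_maps_to (g := r)
      (t := Finset.range (N + 1)) (fun x hx => by
        have := (Finset.mem_filter.mp hx).2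
        rw [hr x]; exact Finset.mem_range.mpr (by omega))]
    refine Finset.sum_congr rfl fun m hm => ?_
    have hm' : m ≤ N := by have := Finset.mem_range.mp hm; omega
    rw [Finset.filter_filter]
    exact hpart m hm'
  have hZR' : ZR = Z / D := by
    rw [hZR, hZ', Finset.sum_div]
    refine Finset.sum_congr rfl fun m _ => ?_
    rw [hPsumS, mul_div_assoc]
  have hLHS : ∑ x ∈ Finset.univ.filter
      (fun x : RiboState P K C => (∑ i, (x i : ℕ)) ≤ N ∧ r x = n), π x
      = (1 / Z) * ((1 / (Nat.factorial n : ℝ)) * S (N - n)) := by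
    rw [← hpart n hn, Finset.mul_sum]
    refine Finset.sum_congr rfl fun x _ => ?_
    rw [hπ x]; ring
  rw [hLHS, hPsumS, hZR']
  have hfact : (Nat.factorial n : ℝ) ≠ 0 := Nat.cast_ne_zero.mpr (Nat.factorial_ne_zero n)
  by_cases hZ0 : Z = 0
  · simp [hZ0]
  · have hD0 : D ≠ 0 := ne_of_gt hDpos
    field_simp
end

section
/- Under the assumptions ρ_p ∈ (0,1) for all 1 ≤ p ≤ P, β_p > 0, and saturation Σ_p β_p E[G_p] > 1 where G_p is truncated geometric with parameter ρ_p on {0,...,C_p}, let δ(C) ∈ (0,1) be the unique solution of Σ_p β_p E[G_p(ρ_p y)] = 1 (with G_p(z) truncated geometric with parameter z on {0,...,C_p}) and δ_0 ∈ (0,1) the unique solution of Σ_p β_p ρ_p y/(1 - ρ_p y) = 1. Then δ_0 ≤ δ(C) and |δ(C) - δ_0| ≤ (1/Σ_p β_p ρ_p) · Σ_p β_p (C_p+1) ρ_p^{C_p+1} / (1 - ρ_p^{C_p}). -/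
/-!
Write `g(z) = z / (1 - z)`. The mean of the geometric law with ratio `z` truncated to `{0, …, n}`
is `g(z)` minus the deficit `d_n(z) = (n + 1) z^(n+1) / (1 - z^(n+1)) ≥ 0`. Subtracting the two
fixed point equations therefore gives `∑ β_p d(ρ_p δ(C)) = ∑ β_p (g(ρ_p δ(C)) - g(ρ_p δ₀))`, and
`g(x) - g(y) = (x - y) / ((1 - x)(1 - y))` turns the right-hand side into `(δ(C) - δ₀) W` with
`W ≥ ∑ β_p ρ_p > 0`. Hence `δ(C) - δ₀` is nonnegative and at most `∑ β_p d(ρ_p δ(C)) / ∑ β_p ρ_p`;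
finally `d(ρ_p δ(C))` is bounded termwise using `ρ_p δ(C) ≤ ρ_p`.
-/

open Finset

section Field

variable {K : Type*} [Field K]

def truncGeomMean (n : ℕ) (z : K) : K :=
  (∑ k ∈ range (n + 1), (k : K) * z ^ k) / ∑ k ∈ range (n + 1), z ^ k

def truncGeomDeficit (n : ℕ) (z : K) : K :=
  (n + 1) * z ^ (n + 1) / (1 - z ^ (n + 1))

theorem mul_geom_sum_sub_one_sub_mul_sum_mul_pow {R : Type*} [CommRing R] (z : R) (n : ℕ) :
    z * ∑ k ∈ range (n + 1), z ^ k - (1 - z) * ∑ k ∈ range (n + 1), (k : R) * z ^ k =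
      (n + 1) * z ^ (n + 1) := by
  induction n with
  | zero => simp
  | succ n ih =>
    rw [sum_range_succ (fun k => z ^ k), sum_range_succ (fun k => (k : R) * z ^ k)]
    push_cast at ih ⊢
    linear_combination ih

theorem truncGeomMean_eq_sub_truncGeomDeficit {n : ℕ} {z : K}
    (hz : z ^ (n + 1) ≠ 1) :
    truncGeomMean n z = z / (1 - z) - truncGeomDeficit n z := by
  have hz1 : 1 - z ≠ 0 := fun h => hz (by rw [← sub_eq_zero.mp h, one_pow])
  have hgeom := mul_neg_geom_sum z (n + 1)
  have hzn : 1 - z ^ (n + 1) ≠ 0 := sub_ne_zero.mpr (Ne.symm hz)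
  have hB : ∑ k ∈ range (n + 1), z ^ k ≠ 0 := fun h => hzn (by rw [← hgeom, h, mul_zero])
  rw [truncGeomMean, truncGeomDeficit, div_sub_div _ _ hz1 hzn,
    div_eq_div_iff hB (mul_ne_zero hz1 hzn)]
  linear_combination (-(1 - z ^ (n + 1))) * mul_geom_sum_sub_one_sub_mul_sum_mul_pow z n +
    ((n + 1) * z ^ (n + 1)) * hgeom

theorem div_one_sub_sub_div_one_sub {x y : K} (hx : x ≠ 1) (hy : y ≠ 1) :
    x / (1 - x) - y / (1 - y) = (x - y) / ((1 - x) * (1 - y)) := by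
  rw [div_sub_div _ _ (sub_ne_zero.mpr hx.symm) (sub_ne_zero.mpr hy.symm)]
  ring

end Field

theorem truncGeomDeficit_nonneg {z : ℝ} (n : ℕ) (hz0 : 0 ≤ z) (hz1 : z < 1) :
    0 ≤ truncGeomDeficit n z := by
  have : 0 < 1 - z ^ (n + 1) := sub_pos.2 (pow_lt_one₀ hz0 hz1 n.succ_ne_zero)
  unfold truncGeomDeficit
  positivity

theorem truncGeomDeficit_le {y ρ : ℝ} {n : ℕ} (hy : 0 ≤ y) (hyρ : y ≤ ρ) (hρ : ρ < 1)
    (hn : n ≠ 0) :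
    truncGeomDeficit n y ≤ (n + 1) * ρ ^ (n + 1) / (1 - ρ ^ n) := by
  have hρ0 : 0 ≤ ρ := hy.trans hyρ
  have hρn : 0 < 1 - ρ ^ n := sub_pos.mpr (pow_lt_one₀ hρ0 hρ hn)
  have hpow : y ^ (n + 1) ≤ ρ ^ (n + 1) := pow_le_pow_left₀ hy hyρ _
  have hρsucc : ρ ^ (n + 1) ≤ ρ ^ n := pow_le_pow_of_le_one hρ0 hρ.le n.le_succ
  exact div_le_div₀ (by positivity) (by gcongr) hρn (by linarith)

theorem mul_mem_Ioo_zero_one {x y : ℝ} (hx : x ∈ Set.Ioo 0 1) (hy : y ∈ Set.Ioo 0 1) :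
    x * y ∈ Set.Ioo 0 1 :=
  ⟨mul_pos hx.1 hy.1, mul_lt_one_of_nonneg_of_lt_one_left hx.1.le hx.2 hy.2.le⟩

theorem le_div_one_sub_mul_one_sub {c x y : ℝ} (hc : 0 ≤ c) (hx : x ∈ Set.Ioo 0 1)
    (hy : y ∈ Set.Ioo 0 1) : c ≤ c / ((1 - x) * (1 - y)) :=
  le_div_self hc (mul_pos (sub_pos.2 hx.2) (sub_pos.2 hy.2))
    (mul_le_one₀ (sub_le_self 1 hx.1.le) (sub_pos.2 hy.2).le (sub_le_self 1 hy.1.le))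

theorem nonneg_and_le_div_of_eq_mul {D t W S : ℝ} (hD : D = t * W) (hD0 : 0 ≤ D) (hS : 0 < S)
    (hSW : S ≤ W) : 0 ≤ t ∧ t ≤ D / S := by
  have ht : 0 ≤ t := nonneg_of_mul_nonneg_left (hD ▸ hD0) (hS.trans_le hSW)
  refine ⟨ht, ?_⟩
  rw [le_div_iff₀ hS, hD]
  exact mul_le_mul_of_nonneg_left hSW ht

theorem sum_mul_truncGeomDeficit_eq_mul_sum {ι : Type*} [Fintype ι] (β ρ : ι → ℝ) (C : ι → ℕ)
    {x y : ℝ} (hx : ∀ p, ρ p * x ∈ Set.Ioo 0 1) (hy : ∀ p, ρ p * y ≠ 1)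
    (hxy : ∑ p, β p * truncGeomMean (C p) (ρ p * x) = ∑ p, β p * ρ p * y / (1 - ρ p * y)) :
    ∑ p, β p * truncGeomDeficit (C p) (ρ p * x) =
      (x - y) * ∑ p, β p * ρ p / ((1 - ρ p * x) * (1 - ρ p * y)) := by
  have hmean p : truncGeomMean (C p) (ρ p * x) =
      ρ p * x / (1 - ρ p * x) - truncGeomDeficit (C p) (ρ p * x) :=
    truncGeomMean_eq_sub_truncGeomDeficit (pow_lt_one₀ (hx p).1.le (hx p).2 (C p).succ_ne_zero).ne
  calc ∑ p, β p * truncGeomDeficit (C p) (ρ p * x)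
      = ∑ p, β p * (ρ p * x / (1 - ρ p * x)) - ∑ p, β p * truncGeomMean (C p) (ρ p * x) := by
        rw [← sum_sub_distrib]
        simp only [hmean, mul_sub, sub_sub_cancel]
    _ = ∑ p, β p * (ρ p * x / (1 - ρ p * x)) - ∑ p, β p * ρ p * y / (1 - ρ p * y) := by
        rw [hxy]
    _ = _ := by
        rw [mul_sum, ← sum_sub_distrib]
        refine sum_congr rfl fun p _ => ?_
        rw [mul_assoc (β p), mul_div_assoc (β p), ← mul_sub,
          div_one_sub_sub_div_one_sub (hx p).2.ne (hy p)]
        ring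

theorem underloaded_approximation_general (P : ℕ) (hP : 1 ≤ P)
    (β ρ : Fin P → ℝ) (C : Fin P → ℕ)
    (hβ : ∀ p, 0 < β p) (hρ : ∀ p, ρ p ∈ Set.Ioo (0 : ℝ) 1) (hC : ∀ p, 1 ≤ C p)
    (E : Fin P → ℝ → ℝ)
    (hE : ∀ p z, E p z = (∑ k ∈ Finset.range (C p + 1), (k : ℝ) * z ^ k) /
        (∑ k ∈ Finset.range (C p + 1), z ^ k))
    (δC δ0 : ℝ)
    (hδC : δC ∈ Set.Ioo (0 : ℝ) 1) (hδCeq : ∑ p, β p * E p (ρ p * δC) = 1)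
    (hδ0 : δ0 ∈ Set.Ioo (0 : ℝ) 1) (hδ0eq : ∑ p, β p * ρ p * δ0 / (1 - ρ p * δ0) = 1) :
    δ0 ≤ δC ∧ |δC - δ0| ≤ (1 / ∑ p, β p * ρ p) *
      ∑ p, β p * ((C p : ℝ) + 1) * ρ p ^ (C p + 1) / (1 - ρ p ^ (C p)) := by
  have hload {δ : ℝ} (hδ : δ ∈ Set.Ioo (0 : ℝ) 1) (p : Fin P) := mul_mem_Ioo_zero_one (hρ p) hδ
  obtain rfl : E = fun p => truncGeomMean (C p) := funext₂ hE
  have hgap := sum_mul_truncGeomDeficit_eq_mul_sum β ρ C (hload hδC) (fun p => (hload hδ0 p).2.ne)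
    (hδCeq.trans hδ0eq.symm)
  have hS : 0 < ∑ p, β p * ρ p :=
    sum_pos (fun p _ => mul_pos (hβ p) (hρ p).1) ⟨⟨0, hP⟩, mem_univ _⟩
  have hSW : ∑ p, β p * ρ p ≤ ∑ p, β p * ρ p / ((1 - ρ p * δC) * (1 - ρ p * δ0)) :=
    sum_le_sum fun p _ => le_div_one_sub_mul_one_sub (mul_pos (hβ p) (hρ p).1).le
      (hload hδC p) (hload hδ0 p)
  obtain ⟨hle, hgap_le⟩ := nonneg_and_le_div_of_eq_mul hgap
    (sum_nonneg fun p _ => mul_nonneg (hβ p).le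
      (truncGeomDeficit_nonneg _ (hload hδC p).1.le (hload hδC p).2)) hS hSW
  refine ⟨sub_nonneg.mp hle, ?_⟩
  rw [abs_of_nonneg hle, one_div_mul_eq_div]
  refine hgap_le.trans (div_le_div_of_nonneg_right (sum_le_sum fun p _ => ?_) hS.le)
  rw [mul_assoc, mul_div_assoc]
  refine mul_le_mul_of_nonneg_left ?_ (hβ p).le
  exact truncGeomDeficit_le (hload hδC p).1.le (mul_le_of_le_one_right (hρ p).1.le hδC.2.le)
    (hρ p).2 (Nat.one_le_iff_ne_zero.mp (hC p))

/-- Underloaded case: the solution δ(C) of the exact fixed point equation and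
the solution δ_0 of the simplified equation satisfy δ_0 ≤ δ(C) and
|δ(C) - δ_0| ≤ (1/Σ β_p ρ_p) Σ β_p (C_p+1) ρ_p^{C_p+1}/(1-ρ_p^{C_p}). -/
theorem underloaded_approximation (P : ℕ) (hP : 1 ≤ P)
    (β ρ : Fin P → ℝ) (C : Fin P → ℕ)
    (hβ : ∀ p, 0 < β p) (hρ : ∀ p, ρ p ∈ Set.Ioo (0 : ℝ) 1) (hC : ∀ p, 1 ≤ C p)
    (E : Fin P → ℝ → ℝ)
    (hE : ∀ p z, E p z = (∑ k ∈ Finset.range (C p + 1), (k : ℝ) * z ^ k) /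
        (∑ k ∈ Finset.range (C p + 1), z ^ k))
    (hsat : 1 < ∑ p, β p * E p (ρ p))
    (δC δ0 : ℝ)
    (hδC : δC ∈ Set.Ioo (0 : ℝ) 1) (hδCeq : ∑ p, β p * E p (ρ p * δC) = 1)
    (hδ0 : δ0 ∈ Set.Ioo (0 : ℝ) 1) (hδ0eq : ∑ p, β p * ρ p * δ0 / (1 - ρ p * δ0) = 1) :
    δ0 ≤ δC ∧ |δC - δ0| ≤ (1 / ∑ p, β p * ρ p) *
      ∑ p, β p * ((C p : ℝ) + 1) * ρ p ^ (C p + 1) / (1 - ρ p ^ (C p)) :=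
  underloaded_approximation_general P hP β ρ C hβ hρ hC E hE δC δ0 hδC hδCeq hδ0 hδ0eq
end

section
/- Suppose K_p^N = N β_p + o(√N) for each 1 ≤ p ≤ P with β_p > 0, the saturation condition Σ_p β_p E[G_p] > 1 holds (G_p truncated geometric with parameter ρ_p on {0,...,C_p}), and θ_N > 0 is the unique solution of N = Σ_p K_p^N E[G_p^{θ_N}] (G_p^θ truncated geometric with parameter ρ_p e^{-θ}). Then θ_N converges as N → ∞ to θ_∞ = -log δ, where δ ∈ (0,1) is the unique solution of Σ_p β_p E[G_p(ρ_p δ)] = 1, with G_p(z) truncated geometric with parameter z on {0,...,C_p}. -/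
open Finset

lemma sumB_pos (C : ℕ) {z : ℝ} (hz : 0 < z) :
    0 < ∑ k ∈ Finset.range (C + 1), z ^ k :=
  Finset.sum_pos (fun k _ => pow_pos hz k) (Finset.nonempty_range_iff.2 (Nat.succ_ne_zero C))

lemma E_mono (C : ℕ) (hC : 1 ≤ C) {z₁ z₂ : ℝ} (h1 : 0 < z₁) (h12 : z₁ < z₂) :
    (∑ k ∈ Finset.range (C + 1), (k : ℝ) * z₁ ^ k) / (∑ k ∈ Finset.range (C + 1), z₁ ^ k)
      < (∑ k ∈ Finset.range (C + 1), (k : ℝ) * z₂ ^ k) / (∑ k ∈ Finset.range (C + 1), z₂ ^ k) := by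
  have h2 : 0 < z₂ := h1.trans h12
  set s := Finset.range (C + 1) with hs
  have hB1 := sumB_pos C h1
  have hB2 := sumB_pos C h2
  rw [div_lt_div_iff₀ hB1 hB2]
  have sumT : ∀ w v : ℝ, (∑ k ∈ s, ∑ j ∈ s, (k : ℝ) * w ^ k * v ^ j)
      = (∑ k ∈ s, (k : ℝ) * w ^ k) * (∑ j ∈ s, v ^ j) := by
    intro w v
    rw [Finset.sum_mul]
    exact Finset.sum_congr rfl fun k _ => by rw [Finset.mul_sum]
  have sumJ : ∀ w v : ℝ, (∑ k ∈ s, ∑ j ∈ s, (j : ℝ) * w ^ k * v ^ j)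
      = (∑ k ∈ s, w ^ k) * (∑ j ∈ s, (j : ℝ) * v ^ j) := by
    intro w v
    rw [Finset.sum_comm, mul_comm, Finset.sum_mul]
    refine Finset.sum_congr rfl fun j _ => ?_
    rw [Finset.mul_sum]
    exact Finset.sum_congr rfl fun k _ => by ring
  have expand : (∑ k ∈ s, ∑ j ∈ s, ((k : ℝ) - (j : ℝ)) * (z₂ ^ k * z₁ ^ j - z₁ ^ k * z₂ ^ j))
      = 2 * ((∑ k ∈ s, (k : ℝ) * z₂ ^ k) * (∑ j ∈ s, z₁ ^ j)
          - (∑ k ∈ s, (k : ℝ) * z₁ ^ k) * (∑ j ∈ s, z₂ ^ j)) := by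
    have e1 : ∀ k j : ℕ, ((k : ℝ) - (j : ℝ)) * (z₂ ^ k * z₁ ^ j - z₁ ^ k * z₂ ^ j)
        = ((k : ℝ) * z₂ ^ k * z₁ ^ j - (k : ℝ) * z₁ ^ k * z₂ ^ j)
          - ((j : ℝ) * z₂ ^ k * z₁ ^ j - (j : ℝ) * z₁ ^ k * z₂ ^ j) := fun k j => by ring
    simp only [e1, Finset.sum_sub_distrib]
    rw [sumT z₂ z₁, sumT z₁ z₂, sumJ z₂ z₁, sumJ z₁ z₂]
    ring
  have key : ∀ k j : ℕ, 0 ≤ ((k : ℝ) - (j : ℝ)) * (z₂ ^ k * z₁ ^ j - z₁ ^ k * z₂ ^ j) := by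
    intro k j
    rcases le_total j k with h | h
    · obtain ⟨d, rfl⟩ := Nat.exists_eq_add_of_le h
      have hfac : z₂ ^ (j + d) * z₁ ^ j - z₁ ^ (j + d) * z₂ ^ j
          = (z₁ * z₂) ^ j * (z₂ ^ d - z₁ ^ d) := by
        rw [pow_add, pow_add, mul_pow]; ring
      rw [hfac]
      apply mul_nonneg
      · push_cast; linarith
      · exact mul_nonneg (pow_nonneg (mul_nonneg h1.le h2.le) j)
          (sub_nonneg.2 (pow_le_pow_left₀ h1.le h12.le d))
    · obtain ⟨d, rfl⟩ := Nat.exists_eq_add_of_le h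
      have hfac : z₂ ^ k * z₁ ^ (k + d) - z₁ ^ k * z₂ ^ (k + d)
          = (z₁ * z₂) ^ k * (z₁ ^ d - z₂ ^ d) := by
        rw [pow_add, pow_add, mul_pow]; ring
      have hrw : ((k : ℝ) - ((k + d : ℕ) : ℝ)) * ((z₁ * z₂) ^ k * (z₁ ^ d - z₂ ^ d))
          = (d : ℝ) * ((z₁ * z₂) ^ k * (z₂ ^ d - z₁ ^ d)) := by push_cast; ring
      rw [hfac, hrw]
      exact mul_nonneg (Nat.cast_nonneg d)
        (mul_nonneg (pow_nonneg (mul_nonneg h1.le h2.le) k)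
          (sub_nonneg.2 (pow_le_pow_left₀ h1.le h12.le d)))
  have hpos : 0 < ∑ k ∈ s, ∑ j ∈ s, ((k : ℝ) - (j : ℝ)) * (z₂ ^ k * z₁ ^ j - z₁ ^ k * z₂ ^ j) := by
    apply Finset.sum_pos'
    · intro k _; exact Finset.sum_nonneg fun j _ => key k j
    · refine ⟨1, by simp only [hs, Finset.mem_range]; omega, ?_⟩
      apply Finset.sum_pos'
      · intro j _; exact key 1 j
      · refine ⟨0, by simp [hs], ?_⟩
        simp only [Nat.cast_one, Nat.cast_zero, pow_one, pow_zero, sub_zero, mul_one, one_mul]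
        linarith
  rw [expand] at hpos
  linarith

lemma E_le (C : ℕ) {z : ℝ} (hz : 0 < z) :
    (∑ k ∈ Finset.range (C + 1), (k : ℝ) * z ^ k) / (∑ k ∈ Finset.range (C + 1), z ^ k)
      ≤ (C : ℝ) := by
  rw [div_le_iff₀ (sumB_pos C hz), Finset.mul_sum]
  refine Finset.sum_le_sum fun k hk => ?_
  have hkC : (k : ℝ) ≤ C := by
    have := Finset.mem_range.1 hk; exact_mod_cast Nat.lt_succ_iff.1 this
  exact mul_le_mul_of_nonneg_right hkC (pow_pos hz k).le

lemma E_nonneg (C : ℕ) {z : ℝ} (hz : 0 < z) :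
    0 ≤ (∑ k ∈ Finset.range (C + 1), (k : ℝ) * z ^ k) / (∑ k ∈ Finset.range (C + 1), z ^ k) :=
  div_nonneg (Finset.sum_nonneg fun k _ => mul_nonneg (Nat.cast_nonneg k) (pow_pos hz k).le)
    (sumB_pos C hz).le

/-- Under the scaling K_p^N = Nβ_p + o(√N) and the saturation condition, the
tilting parameters θ_N (defined by N = Σ_p K_p^N E[G_p^{θ_N}]) converge to
θ_∞ = -log δ, where δ ∈ (0,1) is the unique solution of Σ β_p E[G_p(ρ_p δ)] = 1. -/
theorem theta_N_convergence (P : ℕ) (hP : 1 ≤ P)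
    (β ρ : Fin P → ℝ) (C : Fin P → ℕ)
    (hβ : ∀ p, 0 < β p) (hρ : ∀ p, 0 < ρ p) (hC : ∀ p, 1 ≤ C p)
    (K : ℕ → Fin P → ℕ)
    (hK : ∀ p, (fun N : ℕ => (K N p : ℝ) - (N : ℝ) * β p)
        =o[Filter.atTop] (fun N : ℕ => Real.sqrt N))
    (E : Fin P → ℝ → ℝ)
    (hE : ∀ p z, E p z = (∑ k ∈ Finset.range (C p + 1), (k : ℝ) * z ^ k) /
        (∑ k ∈ Finset.range (C p + 1), z ^ k))
    (hsat : 1 < ∑ p, β p * E p (ρ p))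
    (θ : ℕ → ℝ) (hθpos : ∀ N, 0 < θ N)
    (hθ : ∀ N : ℕ, (N : ℝ) = ∑ p, (K N p : ℝ) * E p (ρ p * Real.exp (-θ N)))
    (δ : ℝ) (hδ : δ ∈ Set.Ioo (0 : ℝ) 1)
    (hδeq : ∑ p, β p * E p (ρ p * δ) = 1) :
    Filter.Tendsto θ Filter.atTop (nhds (-Real.log δ)) := by
  haveI : Nonempty (Fin P) := Fin.pos_iff_nonempty.mp hP
  obtain ⟨hδ0, hδ1⟩ := hδ
  set θI : ℝ := -Real.log δ with hθI
  have hexp : Real.exp (-θI) = δ := by rw [hθI, neg_neg, Real.exp_log hδ0]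
  set F : ℝ → ℝ := fun t => ∑ p, β p * E p (ρ p * Real.exp (-t)) with hF
  -- F is strictly antitone
  have hFanti : ∀ t₁ t₂ : ℝ, t₁ < t₂ → F t₂ < F t₁ := by
    intro t₁ t₂ h
    apply Finset.sum_lt_sum_of_nonempty Finset.univ_nonempty
    intro p _
    have hz2 : 0 < ρ p * Real.exp (-t₂) := mul_pos (hρ p) (Real.exp_pos _)
    have hlt : ρ p * Real.exp (-t₂) < ρ p * Real.exp (-t₁) :=
      mul_lt_mul_of_pos_left (Real.exp_lt_exp.2 (neg_lt_neg h)) (hρ p)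
    have := E_mono (C p) (hC p) hz2 hlt
    rw [← hE, ← hE] at this
    exact mul_lt_mul_of_pos_left this (hβ p)
  have hFanti' : ∀ t₁ t₂ : ℝ, t₁ ≤ t₂ → F t₂ ≤ F t₁ := by
    intro t₁ t₂ h
    rcases eq_or_lt_of_le h with rfl | h
    · exact le_refl _
    · exact (hFanti _ _ h).le
  have hF1 : F θI = 1 := by rw [hF]; simp only [hexp]; exact hδeq
  -- K N p / N - β p → 0
  have hq : ∀ p, Filter.Tendsto (fun N : ℕ => (K N p : ℝ) / N - β p) Filter.atTop (nhds 0) := by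
    intro p
    have h1 : (fun N : ℕ => Real.sqrt N) =O[Filter.atTop] (fun N : ℕ => (N : ℝ)) := by
      rw [Asymptotics.isBigO_iff]
      refine ⟨1, ?_⟩
      filter_upwards [Filter.eventually_ge_atTop 1] with N hN
      have hN1 : (1 : ℝ) ≤ N := by exact_mod_cast hN
      rw [Real.norm_eq_abs, Real.norm_eq_abs, abs_of_nonneg (Real.sqrt_nonneg _),
        abs_of_nonneg (by linarith), one_mul]
      calc Real.sqrt (N : ℝ) ≤ Real.sqrt ((N : ℝ) ^ 2) := Real.sqrt_le_sqrt (by nlinarith)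
        _ = N := Real.sqrt_sq (by linarith)
    have h3 := ((hK p).trans_isBigO h1).tendsto_div_nhds_zero
    refine h3.congr' ?_
    filter_upwards [Filter.eventually_ge_atTop 1] with N hN
    have hN0 : (N : ℝ) ≠ 0 := by
      have : (1:ℝ) ≤ N := by exact_mod_cast hN
      linarith
    field_simp
  -- F (θ N) → 1
  have hEbnd : ∀ p (t : ℝ), |E p (ρ p * Real.exp (-t))| ≤ (C p : ℝ) := by
    intro p t
    have hz : 0 < ρ p * Real.exp (-t) := mul_pos (hρ p) (Real.exp_pos _)
    rw [hE, abs_of_nonneg (E_nonneg (C p) hz)]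
    exact E_le (C p) hz
  have hg : Filter.Tendsto (fun N : ℕ => ∑ p, |(K N p : ℝ) / N - β p| * (C p : ℝ))
      Filter.atTop (nhds 0) := by
    have := Filter.Tendsto.congr (fun N => rfl)
      (tendsto_finset_sum Finset.univ
        (fun p _ => ((hq p).abs.mul_const ((C p : ℝ)))))
    simpa using this
  have hFθ : Filter.Tendsto (fun N : ℕ => F (θ N)) Filter.atTop (nhds 1) := by
    have h0 : Filter.Tendsto (fun N : ℕ => F (θ N) - 1) Filter.atTop (nhds 0) := by
      refine squeeze_zero_norm'
        (a := fun N : ℕ => ∑ p, |(K N p : ℝ) / N - β p| * (C p : ℝ)) ?_ hg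
      filter_upwards [Filter.eventually_ge_atTop 1] with N hN
      have hN1 : (1 : ℝ) ≤ N := by exact_mod_cast hN
      have hN0 : (N : ℝ) ≠ 0 := by linarith
      have hone : ∑ p, ((K N p : ℝ) / N) * E p (ρ p * Real.exp (-θ N)) = 1 := by
        have h := (hθ N).symm
        calc ∑ p, ((K N p : ℝ) / N) * E p (ρ p * Real.exp (-θ N))
            = (∑ p, (K N p : ℝ) * E p (ρ p * Real.exp (-θ N))) / N := by
              rw [Finset.sum_div]; exact Finset.sum_congr rfl fun p _ => by ring
          _ = 1 := by rw [h, div_self hN0]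
      have hdiff : F (θ N) - 1
          = ∑ p, (β p - (K N p : ℝ) / N) * E p (ρ p * Real.exp (-θ N)) := by
        rw [← hone, hF]
        rw [← Finset.sum_sub_distrib]
        exact Finset.sum_congr rfl fun p _ => by ring
      rw [hdiff, Real.norm_eq_abs]
      calc |∑ p, (β p - (K N p : ℝ) / N) * E p (ρ p * Real.exp (-θ N))|
          ≤ ∑ p, |(β p - (K N p : ℝ) / N) * E p (ρ p * Real.exp (-θ N))| :=
            Finset.abs_sum_le_sum_abs _ _
        _ ≤ ∑ p, |(K N p : ℝ) / N - β p| * (C p : ℝ) := by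
            refine Finset.sum_le_sum fun p _ => ?_
            rw [abs_mul, abs_sub_comm]
            exact mul_le_mul_of_nonneg_left (hEbnd p (θ N)) (abs_nonneg _)
    have := h0.add_const 1
    simpa using this
  -- conclude
  rw [Metric.tendsto_atTop]
  intro ε hε
  have ha : F (θI + ε) < 1 := by rw [← hF1]; exact hFanti _ _ (by linarith)
  have hb : 1 < F (θI - ε) := by rw [← hF1]; exact hFanti _ _ (by linarith)
  have hev := hFθ.eventually (Ioo_mem_nhds ha hb :
    Set.Ioo (F (θI + ε)) (F (θI - ε)) ∈ nhds (1 : ℝ))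
  obtain ⟨N₀, hN₀⟩ := Filter.eventually_atTop.1 hev
  refine ⟨N₀, fun n hn => ?_⟩
  obtain ⟨h1, h2⟩ := hN₀ n hn
  have hlt1 : θ n < θI + ε := by
    by_contra h
    exact absurd (hFanti' _ _ (not_lt.1 h)) (not_le.2 h1)
  have hlt2 : θI - ε < θ n := by
    by_contra h
    exact absurd (hFanti' _ _ (not_lt.1 h)) (not_le.2 h2)
  rw [Real.dist_eq, abs_sub_lt_iff]
  constructor <;> linarith
end
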